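/- arXiv:1810.03743 — 4 statements merged into one kernel-verified Lean document; each statement's English description precedes it below -/
import Mathlib

section
/- Let A ∈ ℝ^{m×n} and let B = {B₁,...,B_M} be a partition of the column indices {1,...,n}. Then every vector x ∈ ℝⁿ that is s-block sparse with respect to B is the unique minimizer of ‖w‖_{1,2|B} over all w ∈ ℝⁿ with Aw = Ax, if and only if A satisfies the block null space property of order s: for every v ∈ Null(A) \ {0} and every set S ⊆ {1,...,M} with |S| ≤ s, Σ_{i∈S} ‖v[B_i]‖₂ < Σ_{i∉S} ‖v[B_i]‖₂. -/
/-!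
If `x` is supported on the blocks `S` and `w = x + v` with `v ∈ Null(A)`, the triangle
inequality on each block gives `‖w‖ ≥ ‖x‖ - ‖v_S‖ + ‖v_{Sᶜ}‖`, so the null space property
`‖v_S‖ < ‖v_{Sᶜ}‖` forces `‖x‖ < ‖w‖`. Conversely, for `v ∈ Null(A)` and `|S| ≤ s`, the
block-sparse vector `x = v_S` and the competitor `w = x - v = -v_{Sᶜ}` have the same image under
`A`, so `‖v_S‖ = ‖x‖ < ‖w‖ = ‖v_{Sᶜ}‖`.
-/

noncomputable section

/-- The mixed ℓ_{1,2|B} norm of `v` with respect to the block partition `B`. -/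
def blockNorm {n M : ℕ} (B : Fin M → Finset (Fin n)) (v : Fin n → ℝ) : ℝ :=
  ∑ i, Real.sqrt (∑ j ∈ B i, v j ^ 2)

/-- `v` is `s`-block sparse with respect to `B`: at most `s` blocks are nonzero. -/
def BlockSparse {n M : ℕ} (B : Fin M → Finset (Fin n)) (s : ℕ) (v : Fin n → ℝ) : Prop :=
  {i : Fin M | ∃ j ∈ B i, v j ≠ 0}.ncard ≤ s

open Finset Function Matrix

lemma Real.sqrt_sum_sq_add_le {ι : Type*} (s : Finset ι) (f g : ι → ℝ) :
    √(∑ i ∈ s, (f i + g i) ^ 2) ≤ √(∑ i ∈ s, f i ^ 2) + √(∑ i ∈ s, g i ^ 2) := by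
  have hf : 0 ≤ ∑ i ∈ s, f i ^ 2 := sum_nonneg fun _ _ => sq_nonneg _
  have hg : 0 ≤ ∑ i ∈ s, g i ^ 2 := sum_nonneg fun _ _ => sq_nonneg _
  have hexpand : ∑ i ∈ s, (f i + g i) ^ 2 =
      ∑ i ∈ s, f i ^ 2 + ∑ i ∈ s, g i ^ 2 + 2 * ∑ i ∈ s, f i * g i := by
    simp only [add_sq, sum_add_distrib, mul_sum]
    ring_nf
  rw [Real.sqrt_le_left (by positivity), hexpand, add_sq, Real.sq_sqrt hf, Real.sq_sqrt hg]
  nlinarith [Real.sum_mul_le_sqrt_mul_sqrt s f g]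

section BlockNorm

variable {ι κ : Type*} (B : κ → Finset ι)

/-- `‖v_S‖_{1,2|B}` in the notation of the header. -/
def blockNormOn (S : Finset κ) (v : ι → ℝ) : ℝ :=
  ∑ i ∈ S, √(∑ j ∈ B i, v j ^ 2)

variable {B}

lemma blockNormOn_congr {S : Finset κ} {f g : ι → ℝ} (h : ∀ i ∈ S, ∀ j ∈ B i, f j = g j) :
    blockNormOn B S f = blockNormOn B S g :=
  sum_congr rfl fun i hi => by rw [sum_congr rfl (fun j hj => by rw [h i hi j hj])]

lemma blockNormOn_eq_zero {S : Finset κ} {v : ι → ℝ} (h : ∀ i ∈ S, ∀ j ∈ B i, v j = 0) :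
    blockNormOn B S v = 0 := by
  rw [blockNormOn_congr (g := 0) h]
  simp [blockNormOn]

lemma blockNormOn_neg (S : Finset κ) (v : ι → ℝ) : blockNormOn B S (-v) = blockNormOn B S v := by
  simp [blockNormOn]

lemma blockNormOn_add_le (S : Finset κ) (f g : ι → ℝ) :
    blockNormOn B S (f + g) ≤ blockNormOn B S f + blockNormOn B S g := by
  rw [blockNormOn, blockNormOn, blockNormOn, ← sum_add_distrib]
  exact sum_le_sum fun i _ => Real.sqrt_sum_sq_add_le (B i) f g

lemma blockNormOn_sub_le (S : Finset κ) (f g : ι → ℝ) :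
    blockNormOn B S (f - g) ≤ blockNormOn B S f + blockNormOn B S g := by
  simpa only [sub_eq_add_neg, blockNormOn_neg] using blockNormOn_add_le S f (-g)

lemma blockNorm_eq_blockNormOn_add_compl {n M : ℕ} {B : Fin M → Finset (Fin n)}
    (S : Finset (Fin M)) (v : Fin n → ℝ) :
    blockNorm B v = blockNormOn B S v + blockNormOn B Sᶜ v :=
  (sum_add_sum_compl S _).symm

end BlockNorm

section BlockRestriction

variable {ι κ : Type*} {B : κ → Finset ι}

/-- `v_S` in the notation of the header. -/
def blockRestrict (B : κ → Finset ι) (S : Finset κ) (v : ι → ℝ) : ι → ℝ :=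
  (⋃ i ∈ S, (B i : Set ι)).indicator v

lemma blockRestrict_apply_of_mem {S : Finset κ} {i : κ} (hi : i ∈ S) (v : ι → ℝ) {j : ι}
    (hj : j ∈ B i) : blockRestrict B S v j = v j :=
  Set.indicator_of_mem (Set.mem_biUnion hi hj) v

lemma blockRestrict_apply_of_notMem (hB : Pairwise (Disjoint on B)) {S : Finset κ} {i : κ}
    (hi : i ∉ S) (v : ι → ℝ) {j : ι} (hj : j ∈ B i) : blockRestrict B S v j = 0 := by
  refine Set.indicator_of_notMem ?_ v
  simp only [Set.mem_iUnion, Finset.mem_coe, not_exists]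
  intro i' hi' hj'
  have hne : i ≠ i' := fun h => hi (h ▸ hi')
  exact Finset.disjoint_left.mp (hB hne) hj hj'

end BlockRestriction

section BlockSparse

variable {n M : ℕ} {B : Fin M → Finset (Fin n)}

lemma blockSparse_blockRestrict (hB : Pairwise (Disjoint on B)) {S : Finset (Fin M)} {s : ℕ}
    (hS : S.card ≤ s) (v : Fin n → ℝ) : BlockSparse B s (blockRestrict B S v) := by
  have hsub : {i : Fin M | ∃ j ∈ B i, blockRestrict B S v j ≠ 0} ⊆ (S : Set (Fin M)) := by
    rintro i ⟨j, hj, hne⟩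
    by_contra hi
    exact hne (blockRestrict_apply_of_notMem hB hi v hj)
  exact (Set.ncard_le_ncard hsub).trans ((Set.ncard_coe_finset S).trans_le hS)

lemma BlockSparse.exists_support {s : ℕ} {x : Fin n → ℝ} (hx : BlockSparse B s x) :
    ∃ S : Finset (Fin M), S.card ≤ s ∧ ∀ i ∉ S, ∀ j ∈ B i, x j = 0 := by
  let hfin := Set.toFinite {i : Fin M | ∃ j ∈ B i, x j ≠ 0}
  refine ⟨hfin.toFinset, (Set.ncard_eq_toFinset_card _ hfin).symm.trans_le hx, ?_⟩
  intro i hi j hj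
  by_contra hxj
  exact hi (hfin.mem_toFinset.mpr ⟨j, hj, hxj⟩)

end BlockSparse

def BlockNullSpaceProperty {μ ι κ : Type*} [Fintype ι] [Fintype κ] [DecidableEq κ]
    (A : Matrix μ ι ℝ) (B : κ → Finset ι) (s : ℕ) : Prop :=
  ∀ v : ι → ℝ, A *ᵥ v = 0 → v ≠ 0 →
    ∀ S : Finset κ, S.card ≤ s → blockNormOn B S v < blockNormOn B Sᶜ v

section Recovery

variable {μ : Type*} {n M : ℕ} {A : Matrix μ (Fin n) ℝ} {B : Fin M → Finset (Fin n)} {s : ℕ}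

theorem BlockNullSpaceProperty.blockNorm_lt (hA : BlockNullSpaceProperty A B s)
    {x : Fin n → ℝ} (hx : BlockSparse B s x) {w : Fin n → ℝ} (hw : A *ᵥ w = A *ᵥ x)
    (hwx : w ≠ x) : blockNorm B x < blockNorm B w := by
  obtain ⟨S, hS, hxS⟩ := hx.exists_support
  have hv : A *ᵥ (w - x) = 0 := by rw [mulVec_sub, hw, sub_self]
  have hnsp := hA (w - x) hv (sub_ne_zero.mpr hwx) S hS
  have hxw : blockNormOn B S x ≤ blockNormOn B S w + blockNormOn B S (w - x) := by
    simpa only [sub_sub_cancel] using blockNormOn_sub_le S w (w - x)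
  have hcompl : blockNormOn B Sᶜ (w - x) = blockNormOn B Sᶜ w :=
    blockNormOn_congr fun i hi j hj => by
      rw [Pi.sub_apply, hxS i (mem_compl.mp hi) j hj, sub_zero]
  have hx0 : blockNormOn B Sᶜ x = 0 :=
    blockNormOn_eq_zero fun i hi => hxS i (mem_compl.mp hi)
  rw [blockNorm_eq_blockNormOn_add_compl S x, blockNorm_eq_blockNormOn_add_compl S w, hx0]
  linarith

theorem blockNullSpaceProperty_of_blockNorm_lt (hB : Pairwise (Disjoint on B))
    (H : ∀ x : Fin n → ℝ, BlockSparse B s x → ∀ w : Fin n → ℝ, A *ᵥ w = A *ᵥ x → w ≠ x →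
      blockNorm B x < blockNorm B w) :
    BlockNullSpaceProperty A B s := by
  intro v hv hv0 S hS
  set x := blockRestrict B S v
  have hx_in : ∀ i ∈ S, ∀ j ∈ B i, x j = v j := fun i hi j hj =>
    blockRestrict_apply_of_mem hi v hj
  have hx_out : ∀ i ∈ Sᶜ, ∀ j ∈ B i, x j = 0 := fun i hi j hj =>
    blockRestrict_apply_of_notMem hB (mem_compl.mp hi) v hj
  have hw : A *ᵥ (x - v) = A *ᵥ x := by rw [mulVec_sub, hv, sub_zero]
  have hwx : x - v ≠ x := by simpa [sub_eq_self] using hv0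
  have hlt := H x (blockSparse_blockRestrict hB hS v) (x - v) hw hwx
  have hwS : blockNormOn B S (x - v) = 0 :=
    blockNormOn_eq_zero fun i hi j hj => by rw [Pi.sub_apply, hx_in i hi j hj, sub_self]
  have hwSc : blockNormOn B Sᶜ (x - v) = blockNormOn B Sᶜ (-v) :=
    blockNormOn_congr fun i hi j hj => by
      rw [Pi.sub_apply, hx_out i hi j hj, zero_sub, Pi.neg_apply]
  rwa [blockNorm_eq_blockNormOn_add_compl S x, blockNorm_eq_blockNormOn_add_compl S (x - v),
    blockNormOn_congr hx_in, blockNormOn_eq_zero hx_out, hwS, hwSc, blockNormOn_neg, add_zero,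
    zero_add] at hlt

end Recovery

theorem stmt0_general {m n M : ℕ} (A : Matrix (Fin m) (Fin n) ℝ)
    (B : Fin M → Finset (Fin n))
    (hdisj : ∀ i j, i ≠ j → Disjoint (B i) (B j))
    (s : ℕ) :
    (∀ x : Fin n → ℝ, BlockSparse B s x →
      ∀ w : Fin n → ℝ, A.mulVec w = A.mulVec x → w ≠ x →
        blockNorm B x < blockNorm B w)
    ↔
    (∀ v : Fin n → ℝ, A.mulVec v = 0 → v ≠ 0 →
      ∀ S : Finset (Fin M), S.card ≤ s →
        ∑ i ∈ S, Real.sqrt (∑ j ∈ B i, v j ^ 2) <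
        ∑ i ∈ Sᶜ, Real.sqrt (∑ j ∈ B i, v j ^ 2)) :=
  ⟨blockNullSpaceProperty_of_blockNorm_lt fun i j hij => hdisj i j hij,
    fun hA _ hx _ => BlockNullSpaceProperty.blockNorm_lt hA hx⟩

theorem stmt0 {m n M : ℕ} (A : Matrix (Fin m) (Fin n) ℝ)
    (B : Fin M → Finset (Fin n))
    (hdisj : ∀ i j, i ≠ j → Disjoint (B i) (B j))
    (hcover : ∀ k : Fin n, ∃ i, k ∈ B i) (s : ℕ) :
    (∀ x : Fin n → ℝ, BlockSparse B s x →
      ∀ w : Fin n → ℝ, A.mulVec w = A.mulVec x → w ≠ x →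
        blockNorm B x < blockNorm B w)
    ↔
    (∀ v : Fin n → ℝ, A.mulVec v = 0 → v ≠ 0 →
      ∀ S : Finset (Fin M), S.card ≤ s →
        ∑ i ∈ S, Real.sqrt (∑ j ∈ B i, v j ^ 2) <
        ∑ i ∈ Sᶜ, Real.sqrt (∑ j ∈ B i, v j ^ 2)) :=
  stmt0_general A B hdisj s
end
end

section
/- Let A₁,...,A_K ∈ ℝ^{L×n} satisfy the block null space property (BNSP) of order s, let x* ∈ ℝⁿ be s-sparse, and set y_j = A_j x* for j = 1,...,K. Then X* = (x*, x*, ..., x*) ∈ ℝ^{n×K} is the unique minimizer of ‖X‖_{1,2} over {X ∈ ℝ^{n×K} : A_j x_j = y_j for all j}, and consequently the average of the columns of any minimizer equals x*. -/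
noncomputable section

/-- The mixed ℓ_{1,2} norm of a matrix: sum of the ℓ₂ norms of its rows. -/
def rowNorm12 {n K : ℕ} (X : Matrix (Fin n) (Fin K) ℝ) : ℝ :=
  ∑ i, Real.sqrt (∑ j, X i j ^ 2)

/-- `X` is `s`-row sparse: at most `s` of its rows are nonzero. -/
def RowSparse {n K : ℕ} (s : ℕ) (X : Matrix (Fin n) (Fin K) ℝ) : Prop :=
  {i : Fin n | ∃ j, X i j ≠ 0}.ncard ≤ s

/-- The block null space property (BNSP) of order `s` for matrices `A₁,...,A_K`. -/
def BNSP {L n K : ℕ} (A : Fin K → Matrix (Fin L) (Fin n) ℝ) (s : ℕ) : Prop :=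
  ∀ V : Matrix (Fin n) (Fin K) ℝ,
    (∀ j, (A j).mulVec (fun i => V i j) = 0) → V ≠ 0 →
    ∀ S : Finset (Fin n), S.card ≤ s →
      ∑ i ∈ S, Real.sqrt (∑ j, V i j ^ 2) < ∑ i ∈ Sᶜ, Real.sqrt (∑ j, V i j ^ 2)

/-- A vector is `s`-sparse if it has at most `s` nonzero entries. -/
def Sparse {n : ℕ} (s : ℕ) (v : Fin n → ℝ) : Prop := {i : Fin n | v i ≠ 0}.ncard ≤ s

/-!
Let `X₀` be the candidate minimizer, supported on the rows `S`, and let `X` be any other feasible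
matrix. Then `V = X - X₀` lies in the block null space, and off `S` the rows of `X` and `V`
coincide. The triangle inequality on the rows in `S` together with the BNSP applied to `V` gives
`‖X₀‖_{1,2} ≤ Σ_{S} ‖X[i]‖ + Σ_{S} ‖V[i]‖ < Σ_{S} ‖X[i]‖ + Σ_{Sᶜ} ‖V[i]‖ = ‖X‖_{1,2}`.
Hence every minimizer equals `(x*, …, x*)`, whose columns average to `x*`.
-/

open Finset Matrix

lemma Finset.sum_norm_lt_sum_norm_of_sum_norm_sub_lt {ι E : Type*} [Fintype ι] [DecidableEq ι]
    [SeminormedAddCommGroup E] (S : Finset ι) {x x₀ : ι → E} (hx₀ : ∀ i ∉ S, x₀ i = 0)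
    (h : ∑ i ∈ S, ‖x i - x₀ i‖ < ∑ i ∈ Sᶜ, ‖x i - x₀ i‖) :
    ∑ i, ‖x₀ i‖ < ∑ i, ‖x i‖ := by
  have hx₀S : ∑ i, ‖x₀ i‖ = ∑ i ∈ S, ‖x₀ i‖ :=
    (sum_subset (subset_univ S) fun i _ hi => by simp [hx₀ i hi]).symm
  have hSc : ∑ i ∈ Sᶜ, ‖x i - x₀ i‖ = ∑ i ∈ Sᶜ, ‖x i‖ :=
    sum_congr rfl fun i hi => by rw [hx₀ i (mem_compl.mp hi), sub_zero]
  calc ∑ i, ‖x₀ i‖ = ∑ i ∈ S, ‖x₀ i‖ := hx₀S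
    _ ≤ ∑ i ∈ S, (‖x i‖ + ‖x i - x₀ i‖) :=
        sum_le_sum fun i _ => norm_le_norm_add_norm_sub (x i) (x₀ i)
    _ = ∑ i ∈ S, ‖x i‖ + ∑ i ∈ S, ‖x i - x₀ i‖ := sum_add_distrib
    _ < ∑ i ∈ S, ‖x i‖ + ∑ i ∈ Sᶜ, ‖x i‖ := by rw [← hSc]; gcongr
    _ = ∑ i, ‖x i‖ := sum_add_sum_compl S _

lemma sqrt_sum_sq_eq_norm_toLp {K : Type*} [Fintype K] (v : K → ℝ) :
    √(∑ j, v j ^ 2) = ‖WithLp.toLp 2 v‖ := by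
  simp [EuclideanSpace.norm_eq, Real.norm_eq_abs, sq_abs]

lemma rowNorm12_eq_sum_norm {n K : ℕ} (X : Matrix (Fin n) (Fin K) ℝ) :
    rowNorm12 X = ∑ i, ‖WithLp.toLp 2 (X i)‖ := by
  simp only [rowNorm12, sqrt_sum_sq_eq_norm_toLp]

lemma BNSP.sum_norm_lt {L n K s : ℕ} {A : Fin K → Matrix (Fin L) (Fin n) ℝ} (hA : BNSP A s)
    {V : Matrix (Fin n) (Fin K) ℝ} (hV : ∀ j, A j *ᵥ (fun i => V i j) = 0) (hV₀ : V ≠ 0)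
    {S : Finset (Fin n)} (hS : S.card ≤ s) :
    ∑ i ∈ S, ‖WithLp.toLp 2 (V i)‖ < ∑ i ∈ Sᶜ, ‖WithLp.toLp 2 (V i)‖ := by
  simpa only [sqrt_sum_sq_eq_norm_toLp] using hA V hV hV₀ S hS

lemma rowNorm12_lt_of_rowSparse {L n K s : ℕ} {A : Fin K → Matrix (Fin L) (Fin n) ℝ}
    (hA : BNSP A s) {X₀ X : Matrix (Fin n) (Fin K) ℝ} (hX₀ : RowSparse s X₀)
    (hX : ∀ j, A j *ᵥ (fun i => X i j) = A j *ᵥ (fun i => X₀ i j)) (hne : X ≠ X₀) :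
    rowNorm12 X₀ < rowNorm12 X := by
  classical
  set S := univ.filter fun i => ∃ j, X₀ i j ≠ 0
  have hS : S.card ≤ s := by
    rwa [← Set.ncard_coe_finset, coe_filter_univ]
  have hX₀S : ∀ i ∉ S, WithLp.toLp 2 (X₀ i) = 0 := fun i hi => by
    simp only [S, mem_filter, mem_univ, true_and, not_exists, not_not] at hi
    ext j
    simp [hi]
  have hnull : ∀ j, A j *ᵥ (fun i => (X - X₀) i j) = 0 := fun j => by
    rw [show (fun i => (X - X₀) i j) = (fun i => X i j) - fun i => X₀ i j from rfl,
      mulVec_sub, hX j, sub_self]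
  have hBNSP := hA.sum_norm_lt hnull (sub_ne_zero.mpr hne) hS
  simp only [show ∀ i, (X - X₀) i = X i - X₀ i from fun _ => rfl, WithLp.toLp_sub] at hBNSP
  rw [rowNorm12_eq_sum_norm, rowNorm12_eq_sum_norm]
  exact S.sum_norm_lt_sum_norm_of_sum_norm_sub_lt hX₀S hBNSP

lemma Sparse.rowSparse_replicateCol {n s : ℕ} {x : Fin n → ℝ} (hx : Sparse s x) (K : ℕ) :
    RowSparse s (replicateCol (Fin K) x) := by
  refine (Set.ncard_le_ncard ?_).trans hx
  rintro i ⟨_, hi⟩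
  exact hi

theorem stmt5 {L n K : ℕ} (hK : 0 < K) (A : Fin K → Matrix (Fin L) (Fin n) ℝ) (s : ℕ)
    (hBNSP : BNSP A s) (xstar : Fin n → ℝ) (hxs : Sparse s xstar)
    (y : Fin K → Fin L → ℝ) (hy : ∀ j, y j = (A j).mulVec xstar) :
    (∀ X : Matrix (Fin n) (Fin K) ℝ,
      (∀ j, (A j).mulVec (fun i => X i j) = y j) →
      X ≠ Matrix.of (fun i (_ : Fin K) => xstar i) →
      rowNorm12 (Matrix.of fun i (_ : Fin K) => xstar i) < rowNorm12 X)
    ∧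
    (∀ X : Matrix (Fin n) (Fin K) ℝ,
      (∀ j, (A j).mulVec (fun i => X i j) = y j) →
      (∀ W : Matrix (Fin n) (Fin K) ℝ, (∀ j, (A j).mulVec (fun i => W i j) = y j) →
        rowNorm12 X ≤ rowNorm12 W) →
      (fun i => (K : ℝ)⁻¹ * ∑ j, X i j) = xstar) := by
  have hunique : ∀ X : Matrix (Fin n) (Fin K) ℝ, (∀ j, A j *ᵥ (fun i => X i j) = y j) →
      X ≠ replicateCol (Fin K) xstar →
      rowNorm12 (replicateCol (Fin K) xstar) < rowNorm12 X := fun X hX hne =>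
    rowNorm12_lt_of_rowSparse hBNSP (hxs.rowSparse_replicateCol K)
      (fun j => by simpa [hy] using hX j) hne
  refine ⟨hunique, fun X hX hmin => ?_⟩
  obtain rfl : X = replicateCol (Fin K) xstar := by
    by_contra hne
    exact (hmin _ fun j => (hy j).symm).not_gt (hunique X hX hne)
  funext i
  simp [hK.ne']
end
end

section
/- Let A₁,...,A_K ∈ ℝ^{L×n} and let A^J = blockdiag(A₁,...,A_K) ∈ ℝ^{LK×nK}, acting on stacked vectors v = (v₁;...;v_K) with v_j ∈ ℝⁿ by A^J v = (A₁v₁;...;A_K v_K). Call v s-row-block sparse if the matrix (v₁,...,v_K) ∈ ℝ^{n×K} has at most s nonzero rows. Then for every s ≤ n, the infimum of all δ ≥ 0 such that (1−δ)‖v‖₂² ≤ ‖A^J v‖₂² ≤ (1+δ)‖v‖₂² holds for every s-row-block sparse v ∈ ℝ^{nK} equals max_{j=1,...,K} of the infimum of all δ ≥ 0 such that (1−δ)‖w‖₂² ≤ ‖A_j w‖₂² ≤ (1+δ)‖w‖₂² holds for every s-sparse w ∈ ℝⁿ. -/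
noncomputable section

/-- The ℓ₂ norm of a finitely-indexed real vector. -/
def l2 {ι : Type*} [Fintype ι] (v : ι → ℝ) : ℝ := Real.sqrt (∑ i, v i ^ 2)

/-- The ℓ₁ norm of a finitely-indexed real vector. -/
def l1 {ι : Type*} [Fintype ι] (v : ι → ℝ) : ℝ := ∑ i, |v i|

/-- `A` satisfies the RIP inequality of order `t` with constant `δ`. -/
def RIP {m n : ℕ} (t : ℕ) (δ : ℝ) (A : Matrix (Fin m) (Fin n) ℝ) : Prop :=
  ∀ v : Fin n → ℝ, Sparse t v →
    (1 - δ) * l2 v ^ 2 ≤ l2 (A.mulVec v) ^ 2 ∧ l2 (A.mulVec v) ^ 2 ≤ (1 + δ) * l2 v ^ 2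

def C0 (δ : ℝ) : ℝ := 2 * (1 - (1 - Real.sqrt 2) * δ) / (1 - (1 + Real.sqrt 2) * δ)

def C1 (δ : ℝ) : ℝ := 4 * Real.sqrt (1 + δ) / (1 - (1 + Real.sqrt 2) * δ)

/-! Every set of admissible RIP constants is a closed up-ray `[c, ∞)`. A row-block sparse vector has
`s`-sparse blocks, so the block inequalities add up to the stacked one; conversely a single sparse
block, embedded as a stacked vector, shows that every stacked constant is admissible for each block.
So the stacked constants form `[0, ∞) ∩ ⋂ⱼ [cⱼ, ∞) = [maxⱼ cⱼ, ∞)`. -/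

open Set Matrix

def ripConstants {ι : Type*} (P : ι → Prop) (a b : ι → ℝ) : Set ℝ :=
  {δ | 0 ≤ δ ∧ ∀ v, P v → (1 - δ) * a v ≤ b v ∧ b v ≤ (1 + δ) * a v}

section ripConstants

variable {ι : Type*} {P : ι → Prop} {a b : ι → ℝ}

lemma ripConstants_subset_Ici_zero : ripConstants P a b ⊆ Ici 0 := fun _ hδ => hδ.1

lemma mem_ripConstants_of_le (ha : ∀ v, 0 ≤ a v) {δ δ' : ℝ} (hδ : δ ∈ ripConstants P a b)
    (h : δ ≤ δ') : δ' ∈ ripConstants P a b := by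
  refine ⟨hδ.1.trans h, fun v hv => ?_⟩
  obtain ⟨hlow, hup⟩ := hδ.2 v hv
  exact ⟨le_trans (mul_le_mul_of_nonneg_right (by linarith) (ha v)) hlow,
    hup.trans (mul_le_mul_of_nonneg_right (by linarith) (ha v))⟩

lemma isClosed_ripConstants : IsClosed (ripConstants P a b) := by
  have : ripConstants P a b = Ici 0 ∩ ⋂ v, ⋂ (_ : P v),
      ({δ | (1 - δ) * a v ≤ b v} ∩ {δ | b v ≤ (1 + δ) * a v}) := by
    ext δ
    simp [ripConstants, forall_and]
  rw [this]
  refine isClosed_Ici.inter (isClosed_iInter fun v => isClosed_iInter fun _ => ?_)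
  exact (isClosed_le (by fun_prop) continuous_const).inter
    (isClosed_le continuous_const (by fun_prop))

lemma ripConstants_nonempty (ha : ∀ v, 0 ≤ a v) (hb : ∀ v, P v → 0 ≤ b v) {C : ℝ} (hC : 0 ≤ C)
    (hbC : ∀ v, P v → b v ≤ C * a v) : (ripConstants P a b).Nonempty := by
  refine ⟨1 + C, by positivity, fun v hv => ⟨?_, ?_⟩⟩
  · nlinarith [hb v hv, hbC v hv]
  · nlinarith [ha v, hbC v hv]

lemma ripConstants_eq_Ici (ha : ∀ v, 0 ≤ a v) (hne : (ripConstants P a b).Nonempty) :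
    ripConstants P a b = Ici (sInf (ripConstants P a b)) := by
  have hbdd : BddBelow (ripConstants P a b) := ⟨0, ripConstants_subset_Ici_zero⟩
  refine Subset.antisymm (fun δ hδ => csInf_le hbdd hδ) fun δ hδ => ?_
  exact mem_ripConstants_of_le ha (isClosed_ripConstants.csInf_mem hne hbdd) hδ

end ripConstants

lemma l2_sq {ι : Type*} [Fintype ι] (v : ι → ℝ) : l2 v ^ 2 = ∑ i, v i ^ 2 :=
  Real.sq_sqrt (Finset.sum_nonneg fun _ _ => sq_nonneg _)

lemma l2_mulVec_sq_le {ι κ : Type*} [Fintype ι] [Fintype κ] (A : Matrix κ ι ℝ) (w : ι → ℝ) :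
    l2 (A *ᵥ w) ^ 2 ≤ (∑ k, ∑ i, A k i ^ 2) * l2 w ^ 2 := by
  rw [l2_sq, l2_sq, Finset.sum_mul]
  refine Finset.sum_le_sum fun k _ => ?_
  simpa [mulVec, dotProduct] using Finset.sum_mul_sq_le_sq_mul_sq Finset.univ (A k) w

abbrev sparseRipConstants {L n : ℕ} (A : Matrix (Fin L) (Fin n) ℝ) (s : ℕ) : Set ℝ :=
  ripConstants (Sparse s) (fun w => l2 w ^ 2) (fun w => l2 (A *ᵥ w) ^ 2)

lemma sparseRipConstants_eq_Ici {L n : ℕ} (A : Matrix (Fin L) (Fin n) ℝ) (s : ℕ) :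
    sparseRipConstants A s = Ici (sInf (sparseRipConstants A s)) :=
  ripConstants_eq_Ici (fun _ => sq_nonneg _) <|
    ripConstants_nonempty (fun _ => sq_nonneg _) (fun _ _ => sq_nonneg _) (by positivity)
      fun w _ => l2_mulVec_sq_le A w

def RowBlockSparse {κ : Type*} {n : ℕ} (s : ℕ) (v : κ → Fin n → ℝ) : Prop :=
  {i : Fin n | ∃ j, v j i ≠ 0}.ncard ≤ s

lemma RowBlockSparse.sparse {κ : Type*} {n s : ℕ} {v : κ → Fin n → ℝ}
    (hv : RowBlockSparse s v) (j : κ) : Sparse s (v j) :=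
  (ncard_le_ncard (t := {i | ∃ j, v j i ≠ 0}) (fun _ hi => ⟨j, hi⟩) (toFinite _)).trans hv

lemma rowBlockSparse_single {κ : Type*} [DecidableEq κ] {n s : ℕ} {w : Fin n → ℝ}
    (hw : Sparse s w) (j : κ) : RowBlockSparse s (Pi.single j w) := by
  have : {i : Fin n | ∃ j', (Pi.single j w : κ → Fin n → ℝ) j' i ≠ 0} = {i | w i ≠ 0} := by
    ext i
    simp [Pi.single_apply, apply_ite (fun f : Fin n → ℝ => f i)]
  rw [RowBlockSparse, this]
  exact hw

section blockDiagonal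

variable {κ : Type*} [Fintype κ] {L n : ℕ} (A : κ → Matrix (Fin L) (Fin n) ℝ) (s : ℕ)

abbrev blockRipConstants : Set ℝ :=
  ripConstants (RowBlockSparse s) (fun v : κ → Fin n → ℝ => ∑ j, ∑ i, v j i ^ 2)
    (fun v => ∑ j, l2 (A j *ᵥ v j) ^ 2)

lemma mem_blockRipConstants_of_forall {δ : ℝ} (hδ : 0 ≤ δ)
    (h : ∀ j, δ ∈ sparseRipConstants (A j) s) :
    δ ∈ blockRipConstants A s := by
  refine ⟨hδ, fun v hv => ?_⟩
  have hj : ∀ j, (1 - δ) * ∑ i, v j i ^ 2 ≤ l2 (A j *ᵥ v j) ^ 2 ∧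
      l2 (A j *ᵥ v j) ^ 2 ≤ (1 + δ) * ∑ i, v j i ^ 2 := fun j => by
    simpa only [l2_sq (v j)] using (h j).2 (v j) (hv.sparse j)
  beta_reduce
  rw [Finset.mul_sum, Finset.mul_sum]
  exact ⟨Finset.sum_le_sum fun j _ => (hj j).1, Finset.sum_le_sum fun j _ => (hj j).2⟩

lemma mem_sparseRipConstants_of_mem_blockRipConstants [DecidableEq κ] {δ : ℝ}
    (hδ : δ ∈ blockRipConstants A s) (j : κ) :
    δ ∈ sparseRipConstants (A j) s := by
  refine ⟨hδ.1, fun w hw => ?_⟩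
  have hsingle := hδ.2 (Pi.single j w) (rowBlockSparse_single hw j)
  beta_reduce at hsingle ⊢
  have hnorm : ∑ j', ∑ i, (Pi.single j w : κ → Fin n → ℝ) j' i ^ 2 = l2 w ^ 2 := by
    rw [l2_sq, Fintype.sum_eq_single j fun j' hj' => by simp [hj']]
    simp
  have himage :
      ∑ j', l2 (A j' *ᵥ (Pi.single j w : κ → Fin n → ℝ) j') ^ 2 = l2 (A j *ᵥ w) ^ 2 := by
    rw [Fintype.sum_eq_single j fun j' hj' => by simp [hj', l2]]
    simp
  rwa [hnorm, himage] at hsingle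

end blockDiagonal

lemma sInf_setOf_nonneg_forall_le_eq_iSup {κ : Type*} [Finite κ] (c : κ → ℝ) (hc : ∀ j, 0 ≤ c j) :
    sInf {δ : ℝ | 0 ≤ δ ∧ ∀ j, c j ≤ δ} = ⨆ j, c j := by
  have hbdd : BddAbove (range c) := (finite_range c).bddAbove
  have : {δ : ℝ | 0 ≤ δ ∧ ∀ j, c j ≤ δ} = Ici (⨆ j, c j) := by
    ext δ
    refine ⟨fun hδ => Real.iSup_le hδ.2 hδ.1, fun hδ => ?_⟩
    exact ⟨(Real.iSup_nonneg hc).trans hδ, fun j => (le_ciSup hbdd j).trans hδ⟩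
  rw [this, csInf_Ici]

theorem stmt6_general {L n K : ℕ} (A : Fin K → Matrix (Fin L) (Fin n) ℝ)
    (s : ℕ) :
    sInf {δ : ℝ | 0 ≤ δ ∧ ∀ v : Fin K → Fin n → ℝ,
        {i : Fin n | ∃ j, v j i ≠ 0}.ncard ≤ s →
        (1 - δ) * (∑ j, ∑ i, v j i ^ 2) ≤ (∑ j, l2 ((A j).mulVec (v j)) ^ 2) ∧
        (∑ j, l2 ((A j).mulVec (v j)) ^ 2) ≤ (1 + δ) * (∑ j, ∑ i, v j i ^ 2)}
    = ⨆ j : Fin K, sInf {δ : ℝ | 0 ≤ δ ∧ ∀ w : Fin n → ℝ, Sparse s w →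
        (1 - δ) * l2 w ^ 2 ≤ l2 ((A j).mulVec w) ^ 2 ∧
        l2 ((A j).mulVec w) ^ 2 ≤ (1 + δ) * l2 w ^ 2} := by
  change sInf (blockRipConstants A s) = ⨆ j, sInf (sparseRipConstants (A j) s)
  set c := fun j => sInf (sparseRipConstants (A j) s)
  have hc : ∀ j, 0 ≤ c j := fun j =>
    Real.sInf_nonneg fun _ hδ => ripConstants_subset_Ici_zero hδ
  have hstacked : blockRipConstants A s = {δ | 0 ≤ δ ∧ ∀ j, c j ≤ δ} := by
    ext δ
    refine ⟨fun hδ => ⟨hδ.1, fun j => ?_⟩, fun hδ => ?_⟩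
    · rw [← mem_Ici, ← sparseRipConstants_eq_Ici]
      exact mem_sparseRipConstants_of_mem_blockRipConstants A s hδ j
    · refine mem_blockRipConstants_of_forall A s hδ.1 fun j => ?_
      rw [sparseRipConstants_eq_Ici]
      exact hδ.2 j
  rw [hstacked]
  exact sInf_setOf_nonneg_forall_le_eq_iSup c hc

theorem stmt6 {L n K : ℕ} (hK : 0 < K) (A : Fin K → Matrix (Fin L) (Fin n) ℝ)
    (s : ℕ) (hs : s ≤ n) :
    sInf {δ : ℝ | 0 ≤ δ ∧ ∀ v : Fin K → Fin n → ℝ,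
        {i : Fin n | ∃ j, v j i ≠ 0}.ncard ≤ s →
        (1 - δ) * (∑ j, ∑ i, v j i ^ 2) ≤ (∑ j, l2 ((A j).mulVec (v j)) ^ 2) ∧
        (∑ j, l2 ((A j).mulVec (v j)) ^ 2) ≤ (1 + δ) * (∑ j, ∑ i, v j i ^ 2)}
    = ⨆ j : Fin K, sInf {δ : ℝ | 0 ≤ δ ∧ ∀ w : Fin n → ℝ, Sparse s w →
        (1 - δ) * l2 w ^ 2 ≤ l2 ((A j).mulVec w) ^ 2 ∧
        l2 ((A j).mulVec w) ^ 2 ≤ (1 + δ) * l2 w ^ 2} :=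
  stmt6_general A s
end
end

section
/- Let A₁,...,A_K ∈ ℝ^{L×n}, y₁,...,y_K ∈ ℝ^L, and suppose x* ∈ ℝⁿ is, for every j = 1,...,K, a minimizer of ‖x‖₁ over {x ∈ ℝⁿ : A_j x = y_j}. Then every X = (x₁,...,x_K) ∈ ℝ^{n×K} with A_j x_j = y_j for all j satisfies ‖X‖_{1,2} ≥ √K ‖x*‖₁, and the matrix X* = (x*, x*, ..., x*) is feasible and attains equality: ‖X*‖_{1,2} = √K ‖x*‖₁. -/
noncomputable section

/-!
By Cauchy–Schwarz each row satisfies `‖X[i]‖₁ ≤ √K ‖X[i]‖₂`, so summing over the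
rows, `√K ‖X‖_{1,2}` dominates the entrywise ℓ₁ norm of `X`, which is the sum of the ℓ₁ norms of
its columns. Each column `x_j` is feasible for the `j`-th problem, so `‖x_j‖₁ ≥ ‖x*‖₁`, and the
entrywise ℓ₁ norm is at least `K ‖x*‖₁ = √K · √K ‖x*‖₁`. For `X*` every row is constant, and
Cauchy–Schwarz is an equality.
-/

lemma l1_le_sqrt_card_mul_sqrt_sum_sq {ι : Type*} [Fintype ι] (v : ι → ℝ) :
    l1 v ≤ Real.sqrt (Fintype.card ι) * Real.sqrt (∑ i, v i ^ 2) := by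
  have hsq : l1 v ^ 2 ≤ Fintype.card ι * ∑ i, v i ^ 2 := by
    simpa [l1, sq_abs] using sq_sum_le_card_mul_sum_sq (s := Finset.univ) (f := fun i => |v i|)
  rw [← Real.sqrt_mul (Nat.cast_nonneg _)]
  exact Real.le_sqrt_of_sq_le hsq

lemma rowNorm12_nonneg {n K : ℕ} (X : Matrix (Fin n) (Fin K) ℝ) : 0 ≤ rowNorm12 X :=
  Finset.sum_nonneg fun _ _ => Real.sqrt_nonneg _

lemma sum_l1_col_le_sqrt_mul_rowNorm12 {n K : ℕ} (X : Matrix (Fin n) (Fin K) ℝ) :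
    ∑ j, l1 (fun i => X i j) ≤ Real.sqrt K * rowNorm12 X := by
  calc ∑ j, l1 (fun i => X i j) = ∑ i, l1 (X i) := Finset.sum_comm
    _ ≤ ∑ i, Real.sqrt K * Real.sqrt (∑ j, X i j ^ 2) := by
      gcongr with i
      simpa using l1_le_sqrt_card_mul_sqrt_sum_sq (X i)
    _ = Real.sqrt K * rowNorm12 X := (Finset.mul_sum ..).symm

lemma rowNorm12_of_const {n K : ℕ} (x : Fin n → ℝ) :
    rowNorm12 (Matrix.of fun i (_ : Fin K) => x i) = Real.sqrt K * l1 x := by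
  simp only [rowNorm12, l1, Matrix.of_apply, Finset.sum_const, Finset.card_univ,
    Fintype.card_fin, nsmul_eq_mul, Finset.mul_sum]
  refine Finset.sum_congr rfl fun i _ => ?_
  rw [Real.sqrt_mul (Nat.cast_nonneg _), Real.sqrt_sq_eq_abs]

theorem stmt14_general {L n K : ℕ} (A : Fin K → Matrix (Fin L) (Fin n) ℝ)
    (y : Fin K → Fin L → ℝ) (xstar : Fin n → ℝ)
    (hmin : ∀ j, ∀ w : Fin n → ℝ, (A j).mulVec w = y j → l1 xstar ≤ l1 w) :
    (∀ X : Matrix (Fin n) (Fin K) ℝ,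
      (∀ j, (A j).mulVec (fun i => X i j) = y j) →
      Real.sqrt (K : ℝ) * l1 xstar ≤ rowNorm12 X)
    ∧ rowNorm12 (Matrix.of fun i (_ : Fin K) => xstar i) = Real.sqrt (K : ℝ) * l1 xstar := by
  refine ⟨fun X hX => ?_, rowNorm12_of_const xstar⟩
  have hcols : Real.sqrt K * (Real.sqrt K * l1 xstar) ≤ Real.sqrt K * rowNorm12 X :=
    calc Real.sqrt K * (Real.sqrt K * l1 xstar) = ∑ _j : Fin K, l1 xstar := by
          rw [← mul_assoc, Real.mul_self_sqrt (Nat.cast_nonneg K)]; simp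
      _ ≤ ∑ j, l1 (fun i => X i j) := Finset.sum_le_sum fun j _ => hmin j _ (hX j)
      _ ≤ Real.sqrt K * rowNorm12 X := sum_l1_col_le_sqrt_mul_rowNorm12 X
  rcases (Real.sqrt_nonneg (K : ℝ)).eq_or_lt with hK | hK
  · rw [← hK, zero_mul]
    exact rowNorm12_nonneg X
  · exact le_of_mul_le_mul_left hcols hK

theorem stmt14 {L n K : ℕ} (A : Fin K → Matrix (Fin L) (Fin n) ℝ)
    (y : Fin K → Fin L → ℝ) (xstar : Fin n → ℝ)
    (hfeas : ∀ j, (A j).mulVec xstar = y j)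
    (hmin : ∀ j, ∀ w : Fin n → ℝ, (A j).mulVec w = y j → l1 xstar ≤ l1 w) :
    (∀ X : Matrix (Fin n) (Fin K) ℝ,
      (∀ j, (A j).mulVec (fun i => X i j) = y j) →
      Real.sqrt (K : ℝ) * l1 xstar ≤ rowNorm12 X)
    ∧ rowNorm12 (Matrix.of fun i (_ : Fin K) => xstar i) = Real.sqrt (K : ℝ) * l1 xstar :=
  stmt14_general A y xstar hmin
end
end
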